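/- Let k, n ∈ ℕ with k_n^μ ≤ k < k_{n+1}^μ, and let p be a polynomial of degree ≤ k. Then the polynomial q(z) := ∫ K_n^μ(z,w)·p(w) dμ(w) satisfies q ∈ ℒ_n(μ) and p − q ∈ 𝒩_{n+1}(μ). In particular, for k = k_n^μ = deg p_n^μ, one has 𝒩_n(μ) = {p ∈ ℂ[z] : deg p ≤ deg p_n^μ and ⟨p, p_j^μ⟩_{2,μ} = 0 for j = 0,...,n}. -/

import Mathlib

open MeasureTheory Matrix Finset

namespace CD

variable {d : ℕ}

/-- The `L²(μ)` inner product of two polynomial functions. -/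
noncomputable def inner2 (μ : Measure (Fin d → ℂ)) (f g : MvPolynomial (Fin d) ℂ) : ℂ :=
  ∫ z, MvPolynomial.eval z f * (starRingEnd ℂ) (MvPolynomial.eval z g) ∂μ

/-- The moment matrix `M̃_k(μ)` for an enumeration `α` of multi-indices. -/
noncomputable def momentMatrix (μ : Measure (Fin d → ℂ)) (α : ℕ → (Fin d →₀ ℕ)) (k : ℕ) :
    Matrix (Fin (k + 1)) (Fin (k + 1)) ℂ :=
  Matrix.of fun j ℓ =>
    inner2 μ (MvPolynomial.monomial (α (ℓ : ℕ)) 1) (MvPolynomial.monomial (α (j : ℕ)) 1)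

/-- `k_n^μ = min {k : rank M̃_k(μ) = n+1}`. -/
noncomputable def kdeg (μ : Measure (Fin d → ℂ)) (α : ℕ → (Fin d →₀ ℕ)) (n : ℕ) : ℕ :=
  sInf {k | (momentMatrix μ α k).rank = n + 1}

/-- `deg p ≤ k` with respect to the enumeration `α`. -/
def DegLE (α : ℕ → (Fin d →₀ ℕ)) (p : MvPolynomial (Fin d) ℂ) (k : ℕ) : Prop :=
  ∀ m : ℕ, MvPolynomial.coeff (α m) p ≠ 0 → m ≤ k

/-- `deg p = k` with respect to the enumeration `α`. -/
def DegEq (α : ℕ → (Fin d →₀ ℕ)) (p : MvPolynomial (Fin d) ℂ) (k : ℕ) : Prop :=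
  DegLE α p k ∧ MvPolynomial.coeff (α k) p ≠ 0

/-- An admissible enumeration of all multi-indices: a bijection starting at `0` such that
multiplication by any variable increases the index. -/
def AdmissibleEnum (α : ℕ → (Fin d →₀ ℕ)) : Prop :=
  Function.Bijective α ∧ α 0 = 0 ∧
    ∀ (j : Fin d) (n : ℕ), ∃ k : ℕ, n < k ∧ α k = α n + Finsupp.single j 1

/-- The Christoffel–Darboux kernel `K_n(z,w) = ∑_{j≤n} p_j(z) conj (p_j(w))`. -/
noncomputable def CDkernel (p : ℕ → MvPolynomial (Fin d) ℂ) (n : ℕ) (z w : Fin d → ℂ) : ℂ :=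
  ∑ j ∈ Finset.range (n + 1),
    MvPolynomial.eval z (p j) * (starRingEnd ℂ) (MvPolynomial.eval w (p j))

/-- `p_0, …, p_n` is the Gram–Schmidt orthonormal family in `L²(μ)`:
orthonormal, with `p_m` a linear combination of the monomials `z^{α(k_0)},…,z^{α(k_m)}`
with positive (real) leading coefficient. -/
def IsONBasisUpTo (μ : Measure (Fin d → ℂ)) (α : ℕ → (Fin d →₀ ℕ))
    (p : ℕ → MvPolynomial (Fin d) ℂ) (n : ℕ) : Prop :=
  (∀ i ≤ n, ∀ j ≤ n, inner2 μ (p i) (p j) = if i = j then 1 else 0) ∧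
  (∀ m ≤ n, ∃ c : Fin (m + 1) → ℂ, 0 < (c (Fin.last m)).re ∧ (c (Fin.last m)).im = 0 ∧
      p m = ∑ i : Fin (m + 1), MvPolynomial.monomial (α (kdeg μ α (i : ℕ))) (c i))

/-- The full Gram–Schmidt orthonormal sequence of `μ`. -/
def IsONBasis (μ : Measure (Fin d → ℂ)) (α : ℕ → (Fin d →₀ ℕ))
    (p : ℕ → MvPolynomial (Fin d) ℂ) : Prop :=
  ∀ n, IsONBasisUpTo μ α p n

/-- The (closed) support of a measure. -/
def msupport {X : Type*} [TopologicalSpace X] [MeasurableSpace X] (μ : Measure X) : Set X :=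
  {x | ∀ U : Set X, x ∈ U → IsOpen U → μ U ≠ 0}

/-- `𝒩(μ)`: the ideal of polynomials vanishing on `supp(μ)`. -/
def Nideal (μ : Measure (Fin d → ℂ)) : Set (MvPolynomial (Fin d) ℂ) :=
  {q | ∀ z ∈ msupport μ, MvPolynomial.eval z q = 0}

/-- `𝒩_n(μ) = {p ∈ 𝒩(μ) : deg p ≤ k_n^μ}`. -/
def NidealLE (μ : Measure (Fin d → ℂ)) (α : ℕ → (Fin d →₀ ℕ)) (n : ℕ) :
    Set (MvPolynomial (Fin d) ℂ) :=
  {q | q ∈ Nideal μ ∧ DegLE α q (kdeg μ α n)}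

/-- `𝒮_n(μ)`: the common zero set of `𝒩_n(μ)`. -/
def Svariety (μ : Measure (Fin d → ℂ)) (α : ℕ → (Fin d →₀ ℕ)) (n : ℕ) : Set (Fin d → ℂ) :=
  {z | ∀ q ∈ NidealLE μ α n, MvPolynomial.eval z q = 0}

/-- `𝒮(μ)`: the Zariski closure of `supp(μ)`, i.e. the common zero set of `𝒩(μ)`. -/
def Szar (μ : Measure (Fin d → ℂ)) : Set (Fin d → ℂ) :=
  {z | ∀ q ∈ Nideal μ, MvPolynomial.eval z q = 0}

/-- `ℒ_n(μ)`: the span of `p_0,…,p_n`. -/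
def Lspan (p : ℕ → MvPolynomial (Fin d) ℂ) (n : ℕ) : Set (MvPolynomial (Fin d) ℂ) :=
  {q | ∃ c : Fin (n + 1) → ℂ, q = ∑ j : Fin (n + 1), c j • p (j : ℕ)}

/-- The `L²(μ)` norm of a polynomial. -/
noncomputable def norm2 (μ : Measure (Fin d → ℂ)) (f : MvPolynomial (Fin d) ℂ) : ℝ :=
  Real.sqrt ((inner2 μ f f).re)

/-- Multivariate cosine function `C_n(z,w)`. -/
noncomputable def coskM (p : ℕ → MvPolynomial (Fin d) ℂ) (n : ℕ) (z w : Fin d → ℂ) : ℂ :=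
  CDkernel p n z w /
    ((Real.sqrt ((CDkernel p n z z).re) * Real.sqrt ((CDkernel p n w w).re) : ℝ) : ℂ)

/-!
Send polynomials to `L²(μ)`. The moment matrix `M̃_k(μ)` is the Gram matrix of the monomials
`z^{α(0)}, …, z^{α(k)}` there, so its rank is the dimension of their span `W_k`; this dimension
grows by at most one with `k`, hence `dim W_k = n + 1` exactly when `k_n ≤ k < k_{n+1}`. For such
`k` the orthonormal `p_0, …, p_n` lie in `W_k` and therefore form an orthonormal basis of it, so a
polynomial `P` of degree `≤ k` coincides in `L²(μ)`, i.e. on `supp μ`, with its Fourier sum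
`∑ ⟨P, p_j⟩ p_j = ∫ K_n(·, w) P(w) dμ(w)`. When `k = k_n`, a `P` orthogonal to every `p_j` has
Fourier sum `0` and thus vanishes on `supp μ`.
-/

section Gram

variable {𝕜 E ι : Type*} [RCLike 𝕜] [NormedAddCommGroup E] [InnerProductSpace 𝕜 E] [Fintype ι]

theorem _root_.Matrix.rank_gram (v : ι → E) :
    (gram 𝕜 v).rank = Module.finrank 𝕜 (Submodule.span 𝕜 (Set.range v)) := by
  -- `star c ⬝ᵥ gram v *ᵥ c = ‖∑ cᵢ vᵢ‖²`, so both maps have the same kernel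
  have hker : LinearMap.ker (gram 𝕜 v).mulVecLin =
      LinearMap.ker (Fintype.linearCombination 𝕜 v) := by
    ext c
    simp only [LinearMap.mem_ker, mulVecLin_apply, Fintype.linearCombination_apply]
    constructor
    · intro hc
      have hnorm := star_dotProduct_gram_mulVec (𝕜 := 𝕜) v c c
      rw [hc, dotProduct_zero] at hnorm
      exact inner_self_eq_zero.mp hnorm.symm
    · intro hc
      ext i
      classical
      simpa [hc] using star_dotProduct_gram_mulVec (𝕜 := 𝕜) v (Pi.single i 1) c
  have hG := LinearMap.finrank_range_add_finrank_ker (gram 𝕜 v).mulVecLin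
  have hT := LinearMap.finrank_range_add_finrank_ker (Fintype.linearCombination 𝕜 v)
  rw [hker] at hG
  rw [Fintype.range_linearCombination] at hT
  rw [Matrix.rank]
  omega

theorem _root_.Orthonormal.sum_inner_smul_eq_of_mem_span {e : ι → E} (he : Orthonormal 𝕜 e)
    {x : E} (hx : x ∈ Submodule.span 𝕜 (Set.range e)) :
    ∑ j, inner 𝕜 (e j) x • e j = x := by
  obtain ⟨c, rfl⟩ := (Submodule.mem_span_range_iff_exists_fun 𝕜).mp hx
  simp only [he.inner_right_fintype]

end Gram

section UnitSteps

variable {F : ℕ → ℕ} (hstep : ∀ k, F (k + 1) ≤ F k + 1)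
include hstep

theorem exists_le_apply_eq_of_le_of_le {m K : ℕ} (h0 : F 0 ≤ m) (hm : m ≤ F K) :
    ∃ j ≤ K, F j = m := by
  induction K with
  | zero => exact ⟨0, le_rfl, by omega⟩
  | succ K ih =>
    by_cases h : m ≤ F K
    · obtain ⟨j, hj, rfl⟩ := ih h
      exact ⟨j, hj.trans K.le_succ, rfl⟩
    · exact ⟨K + 1, le_rfl, by have := hstep K; omega⟩

theorem sInf_setOf_apply_eq_le {m K : ℕ} (h0 : F 0 ≤ m) (hm : m ≤ F K) :
    sInf {j | F j = m} ≤ K := by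
  obtain ⟨j, hjK, hj⟩ := exists_le_apply_eq_of_le_of_le hstep h0 hm
  exact (Nat.sInf_le (show j ∈ {j | F j = m} from hj)).trans hjK

theorem apply_sInf_setOf_apply_eq {m K : ℕ} (h0 : F 0 ≤ m) (hm : m ≤ F K) :
    F (sInf {j | F j = m}) = m := by
  obtain ⟨j, -, hj⟩ := exists_le_apply_eq_of_le_of_le hstep h0 hm
  exact Nat.sInf_mem (s := {j | F j = m}) ⟨j, hj⟩

end UnitSteps

theorem msupport_eq_support {X : Type*} [TopologicalSpace X] [MeasurableSpace X]
    (μ : Measure X) : msupport μ = μ.support := by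
  ext x
  simp [msupport, Measure.support_eq_forall_isOpen, pos_iff_ne_zero]

section CompactSupport

variable {X E : Type*} [TopologicalSpace X] [MeasurableSpace X] [OpensMeasurableSpace X]
  [HereditarilyLindelofSpace X] [NormedAddCommGroup E] [SecondCountableTopologyEither X E]
  {μ : Measure X} [IsFiniteMeasure μ]

theorem _root_.Continuous.memLp_of_isCompact_support (hμ : IsCompact μ.support) {f : X → E}
    (hf : Continuous f) (q : ENNReal) : MemLp f q μ := by
  obtain ⟨C, hC⟩ := hμ.exists_bound_of_continuousOn hf.continuousOn
  refine MemLp.of_bound hf.aestronglyMeasurable C ?_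
  filter_upwards [Measure.support_mem_ae] with x hx using hC x hx

theorem _root_.Continuous.integrable_of_isCompact_support (hμ : IsCompact μ.support)
    {f : X → E} (hf : Continuous f) : Integrable f μ :=
  memLp_one_iff_integrable.mp (hf.memLp_of_isCompact_support hμ 1)

end CompactSupport

section L2

variable (μ : Measure (Fin d → ℂ)) [IsFiniteMeasure μ] (hμ : IsCompact (msupport μ))
include hμ

theorem memLp_eval (f : MvPolynomial (Fin d) ℂ) : MemLp (fun z => MvPolynomial.eval z f) 2 μ :=
  (MvPolynomial.continuous_eval f).memLp_of_isCompact_support (msupport_eq_support μ ▸ hμ) 2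

noncomputable def toL2 : MvPolynomial (Fin d) ℂ →ₗ[ℂ] Lp ℂ 2 μ where
  toFun f := (memLp_eval μ hμ f).toLp _
  map_add' f g := by
    rw [← MemLp.toLp_add]
    exact MemLp.toLp_congr _ _ (.of_forall fun z => by simp)
  map_smul' c f := by
    rw [RingHom.id_apply, ← MemLp.toLp_const_smul]
    exact MemLp.toLp_congr _ _ (.of_forall fun z => by simp [MvPolynomial.smul_eval])

variable {μ}

theorem coeFn_toL2 (f : MvPolynomial (Fin d) ℂ) :
    toL2 μ hμ f =ᵐ[μ] fun z => MvPolynomial.eval z f :=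
  MemLp.coeFn_toLp (memLp_eval μ hμ f)

theorem inner_toL2 (f g : MvPolynomial (Fin d) ℂ) :
    inner ℂ (toL2 μ hμ g) (toL2 μ hμ f) = inner2 μ f g := by
  rw [L2.inner_def, inner2]
  refine integral_congr_ae ?_
  filter_upwards [coeFn_toL2 hμ f, coeFn_toL2 hμ g] with z hf hg
  rw [hf, hg, RCLike.inner_apply, mul_comm]

theorem toL2_eq_zero_iff {f : MvPolynomial (Fin d) ℂ} : toL2 μ hμ f = 0 ↔ f ∈ Nideal μ := by
  rw [Lp.eq_zero_iff_ae_eq_zero, (coeFn_toL2 hμ f).congr_left, Nideal, msupport_eq_support]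
  constructor
  · intro h
    exact Measure.support_subset_of_isClosed
      (isClosed_eq (MvPolynomial.continuous_eval f) continuous_const) h
  · intro h
    filter_upwards [Measure.support_mem_ae] with z hz using h z hz

end L2

section MomentMatrix

variable (μ : Measure (Fin d → ℂ)) [IsFiniteMeasure μ] (hμ : IsCompact (msupport μ))
  (α : ℕ → (Fin d →₀ ℕ))

noncomputable def monomialSpan (k : ℕ) : Submodule ℂ (Lp ℂ 2 μ) :=
  Submodule.span ℂ ((fun m => toL2 μ hμ (MvPolynomial.monomial (α m) 1)) '' Set.Iic k)

instance (k : ℕ) : FiniteDimensional ℂ (monomialSpan μ hμ α k) :=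
  FiniteDimensional.span_of_finite ℂ ((Set.finite_Iic k).image _)

omit [IsFiniteMeasure μ] in
theorem rank_momentMatrix_zero_le_one : (momentMatrix μ α 0).rank ≤ 1 :=
  (rank_le_card_width _).trans_eq (Fintype.card_fin 1)

variable {μ}

theorem rank_momentMatrix_eq_finrank (k : ℕ) :
    (momentMatrix μ α k).rank = Module.finrank ℂ (monomialSpan μ hμ α k) := by
  have hgram : momentMatrix μ α k =
      gram ℂ fun j : Fin (k + 1) => toL2 μ hμ (MvPolynomial.monomial (α j) 1) := by
    ext j ℓ
    exact (inner_toL2 hμ _ _).symm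
  have hrange : Set.range (fun j : Fin (k + 1) => toL2 μ hμ (MvPolynomial.monomial (α j) 1)) =
      (fun m => toL2 μ hμ (MvPolynomial.monomial (α m) 1)) '' Set.Iic k := by
    rw [← Set.Iio_add_one_eq_Iic, ← Fin.range_val, ← Set.range_comp]
    rfl
  rw [hgram, rank_gram, hrange, monomialSpan]

include hμ in
theorem monotone_rank_momentMatrix : Monotone fun k => (momentMatrix μ α k).rank := by
  intro k l hkl
  simp only [rank_momentMatrix_eq_finrank hμ]
  exact Submodule.finrank_mono
    (Submodule.span_mono (Set.image_mono (Set.Iic_subset_Iic.mpr hkl)))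

include hμ in
theorem rank_momentMatrix_succ_le (k : ℕ) :
    (momentMatrix μ α (k + 1)).rank ≤ (momentMatrix μ α k).rank + 1 := by
  simp only [rank_momentMatrix_eq_finrank hμ]
  have hsucc : monomialSpan μ hμ α (k + 1) =
      (ℂ ∙ toL2 μ hμ (MvPolynomial.monomial (α (k + 1)) 1)) ⊔ monomialSpan μ hμ α k := by
    rw [monomialSpan, ← Order.succ_eq_add_one, Order.Iic_succ, Set.image_insert_eq,
      Submodule.span_insert]
    rfl
  rw [hsucc]
  refine (Submodule.finrank_add_le_finrank_add_finrank _ _).trans ?_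
  rw [add_comm]
  gcongr
  exact (finrank_span_le_card _).trans_eq (by simp)

end MomentMatrix

section Kdeg

variable {μ : Measure (Fin d → ℂ)} [IsFiniteMeasure μ] (hμ : IsCompact (msupport μ))
  {α : ℕ → (Fin d →₀ ℕ)}
include hμ

theorem kdeg_le_of_le_rank {n K : ℕ} (hK : n + 1 ≤ (momentMatrix μ α K).rank) :
    kdeg μ α n ≤ K :=
  sInf_setOf_apply_eq_le (F := fun k => (momentMatrix μ α k).rank)
    (rank_momentMatrix_succ_le hμ α)
    ((rank_momentMatrix_zero_le_one μ α).trans (by omega)) hK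

variable (hrank : ∀ m : ℕ, ∃ k : ℕ, m + 1 ≤ (momentMatrix μ α k).rank)
include hrank

theorem rank_momentMatrix_kdeg (n : ℕ) : (momentMatrix μ α (kdeg μ α n)).rank = n + 1 := by
  obtain ⟨K, hK⟩ := hrank n
  exact apply_sInf_setOf_apply_eq (F := fun k => (momentMatrix μ α k).rank)
    (rank_momentMatrix_succ_le hμ α)
    ((rank_momentMatrix_zero_le_one μ α).trans (by omega)) hK

theorem monotone_kdeg : Monotone (kdeg μ α) :=
  monotone_nat_of_le_succ fun n =>
    kdeg_le_of_le_rank hμ (by rw [rank_momentMatrix_kdeg hμ hrank]; omega)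

theorem rank_momentMatrix_of_kdeg_le_of_lt_kdeg {n k : ℕ} (hk1 : kdeg μ α n ≤ k)
    (hk2 : k < kdeg μ α (n + 1)) : (momentMatrix μ α k).rank = n + 1 := by
  refine le_antisymm ?_ ?_
  · by_contra! h
    exact hk2.not_ge (kdeg_le_of_le_rank hμ h)
  · rw [← rank_momentMatrix_kdeg hμ hrank n]
    exact monotone_rank_momentMatrix hμ α hk1

end Kdeg

section Degree

variable (α : ℕ → (Fin d →₀ ℕ))

def degLESubmodule (k : ℕ) : Submodule ℂ (MvPolynomial (Fin d) ℂ) where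
  carrier := {p | DegLE α p k}
  add_mem' {p q} hp hq m hm := by
    rw [MvPolynomial.coeff_add] at hm
    by_cases h : MvPolynomial.coeff (α m) p = 0
    · exact hq m (by simpa [h] using hm)
    · exact hp m h
  zero_mem' _ hm := absurd (MvPolynomial.coeff_zero _) hm
  smul_mem' c p hp m hm := hp m fun h => hm (by simp [h])

variable {α}

theorem degLESubmodule_mono : Monotone (degLESubmodule α) :=
  fun _ _ hkl _ hp m hm => (hp m hm).trans hkl

theorem monomial_mem_degLESubmodule (hα : Function.Injective α) {m k : ℕ} (hm : m ≤ k) (c : ℂ) :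
    MvPolynomial.monomial (α m) c ∈ degLESubmodule α k := by
  intro m' hm'
  rw [MvPolynomial.coeff_monomial] at hm'
  split_ifs at hm' with h
  · exact hα h ▸ hm
  · exact absurd rfl hm'

theorem toL2_mem_monomialSpan {μ : Measure (Fin d → ℂ)} [IsFiniteMeasure μ]
    (hμ : IsCompact (msupport μ)) (hα : Function.Surjective α) {Q : MvPolynomial (Fin d) ℂ}
    {k : ℕ} (hQ : Q ∈ degLESubmodule α k) : toL2 μ hμ Q ∈ monomialSpan μ hμ α k := by
  rw [MvPolynomial.as_sum Q, map_sum]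
  refine Submodule.sum_mem _ fun v hv => ?_
  obtain ⟨m, rfl⟩ := hα v
  rw [← mul_one (MvPolynomial.coeff (α m) Q), ← smul_eq_mul, ← MvPolynomial.smul_monomial,
    map_smul]
  exact Submodule.smul_mem _ _
    (Submodule.subset_span ⟨m, hQ m (MvPolynomial.mem_support_iff.mp hv), rfl⟩)

end Degree

section Projection

variable {μ : Measure (Fin d → ℂ)} {α : ℕ → (Fin d →₀ ℕ)} {p : ℕ → MvPolynomial (Fin d) ℂ}
  {n : ℕ}

theorem IsONBasisUpTo.mem_degLESubmodule (hp : IsONBasisUpTo μ α p n)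
    (hα : Function.Injective α) (hmono : Monotone (kdeg μ α)) {j : ℕ} (hj : j ≤ n) :
    p j ∈ degLESubmodule α (kdeg μ α n) := by
  obtain ⟨c, -, -, hpj⟩ := hp.2 j hj
  rw [hpj]
  exact Submodule.sum_mem _ fun i _ =>
    monomial_mem_degLESubmodule hα (hmono (i.is_le.trans hj)) _

theorem IsONBasisUpTo.orthonormal_toL2 [IsFiniteMeasure μ] (hμ : IsCompact (msupport μ))
    (hp : IsONBasisUpTo μ α p n) : Orthonormal ℂ fun j : Fin (n + 1) => toL2 μ hμ (p j) := by
  rw [orthonormal_iff_ite]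
  intro i j
  rw [inner_toL2, hp.1 j j.is_le i i.is_le]
  simp [Fin.ext_iff, eq_comm]

variable (μ p n) in
noncomputable def cdProj (Q : MvPolynomial (Fin d) ℂ) : MvPolynomial (Fin d) ℂ :=
  ∑ j ∈ Finset.range (n + 1), inner2 μ Q (p j) • p j

theorem cdProj_mem_Lspan (Q : MvPolynomial (Fin d) ℂ) : cdProj μ p n Q ∈ Lspan p n :=
  ⟨fun j => inner2 μ Q (p j), Finset.sum_range _⟩

theorem cdProj_mem_degLESubmodule (hp : IsONBasisUpTo μ α p n) (hα : Function.Injective α)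
    (hmono : Monotone (kdeg μ α)) (Q : MvPolynomial (Fin d) ℂ) :
    cdProj μ p n Q ∈ degLESubmodule α (kdeg μ α n) :=
  Submodule.sum_mem _ fun _ hj => Submodule.smul_mem _ _
    (hp.mem_degLESubmodule hα hmono (Nat.lt_succ_iff.mp (Finset.mem_range.mp hj)))

theorem eval_cdProj [IsFiniteMeasure μ] (hμ : IsCompact (msupport μ))
    (Q : MvPolynomial (Fin d) ℂ) (z : Fin d → ℂ) :
    MvPolynomial.eval z (cdProj μ p n Q) =
      ∫ w, CDkernel p n z w * MvPolynomial.eval w Q ∂μ := by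
  have hint : ∀ j, Integrable (fun w => MvPolynomial.eval z (p j) *
      ((starRingEnd ℂ) (MvPolynomial.eval w (p j)) * MvPolynomial.eval w Q)) μ := fun j =>
    (continuous_const.mul ((Complex.continuous_conj.comp (MvPolynomial.continuous_eval _)).mul
      (MvPolynomial.continuous_eval Q))).integrable_of_isCompact_support
      (msupport_eq_support μ ▸ hμ)
  simp only [cdProj, CDkernel, map_sum, MvPolynomial.smul_eval, Finset.sum_mul, mul_assoc]
  rw [integral_finsetSum _ fun j _ => hint j]
  refine Finset.sum_congr rfl fun j _ => ?_
  rw [integral_const_mul, inner2, mul_comm]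
  simp only [mul_comm (MvPolynomial.eval _ Q)]

end Projection

section Main

variable {μ : Measure (Fin d → ℂ)} [IsFiniteMeasure μ] (hμ : IsCompact (msupport μ))
  {α : ℕ → (Fin d →₀ ℕ)} (hα : Function.Bijective α)
  (hrank : ∀ m : ℕ, ∃ k : ℕ, m + 1 ≤ (momentMatrix μ α k).rank)
  {p : ℕ → MvPolynomial (Fin d) ℂ} {n k : ℕ} (hp : IsONBasisUpTo μ α p n)
  (hk1 : kdeg μ α n ≤ k) (hk2 : k < kdeg μ α (n + 1))
include hμ hα hrank hp hk1 hk2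

theorem toL2_cdProj {Q : MvPolynomial (Fin d) ℂ} (hQ : Q ∈ degLESubmodule α k) :
    toL2 μ hμ (cdProj μ p n Q) = toL2 μ hμ Q := by
  set e := fun j : Fin (n + 1) => toL2 μ hμ (p j)
  have he : Orthonormal ℂ e := hp.orthonormal_toL2 hμ
  have hspan : Submodule.span ℂ (Set.range e) = monomialSpan μ hμ α k := by
    refine Submodule.eq_of_le_of_finrank_eq ?_ ?_
    · rw [Submodule.span_le]
      rintro _ ⟨j, rfl⟩
      exact toL2_mem_monomialSpan hμ hα.2 (degLESubmodule_mono hk1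
        (hp.mem_degLESubmodule hα.1 (monotone_kdeg hμ hrank) j.is_le))
    · rw [finrank_span_eq_card he.linearIndependent, Fintype.card_fin,
        ← rank_momentMatrix_eq_finrank hμ, rank_momentMatrix_of_kdeg_le_of_lt_kdeg hμ hrank hk1 hk2]
  calc toL2 μ hμ (cdProj μ p n Q) = ∑ j, inner ℂ (e j) (toL2 μ hμ Q) • e j := by
        simp only [cdProj, map_sum, map_smul, inner_toL2, e, Finset.sum_range]
    _ = toL2 μ hμ Q :=
        he.sum_inner_smul_eq_of_mem_span (hspan ▸ toL2_mem_monomialSpan hμ hα.2 hQ)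

theorem sub_cdProj_mem_Nideal {Q : MvPolynomial (Fin d) ℂ} (hQ : Q ∈ degLESubmodule α k) :
    Q - cdProj μ p n Q ∈ Nideal μ :=
  (toL2_eq_zero_iff hμ).mp (by rw [map_sub, toL2_cdProj hμ hα hrank hp hk1 hk2 hQ, sub_self])

end Main

theorem NidealLE_eq_setOf_inner2_eq_zero {μ : Measure (Fin d → ℂ)} [IsFiniteMeasure μ]
    (hμ : IsCompact (msupport μ)) {α : ℕ → (Fin d →₀ ℕ)} (hα : Function.Bijective α)
    (hrank : ∀ m : ℕ, ∃ k : ℕ, m + 1 ≤ (momentMatrix μ α k).rank)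
    {p : ℕ → MvPolynomial (Fin d) ℂ} {n : ℕ} (hp : IsONBasisUpTo μ α p n)
    (hn : kdeg μ α n < kdeg μ α (n + 1)) :
    NidealLE μ α n =
      {Q | DegLE α Q (kdeg μ α n) ∧ ∀ j ≤ n, inner2 μ Q (p j) = 0} := by
  ext Q
  constructor
  · rintro ⟨hQ, hdeg⟩
    refine ⟨hdeg, fun j _ => ?_⟩
    rw [← inner_toL2 hμ, (toL2_eq_zero_iff hμ).mpr hQ, inner_zero_right]
  · rintro ⟨hdeg, horth⟩
    have hproj : cdProj μ p n Q = 0 := Finset.sum_eq_zero fun j hj => by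
      rw [horth j (Nat.lt_succ_iff.mp (Finset.mem_range.mp hj)), zero_smul]
    have hQ := sub_cdProj_mem_Nideal hμ hα hrank hp le_rfl hn hdeg
    rw [hproj, sub_zero] at hQ
    exact ⟨hQ, hdeg⟩

theorem statement1_general (μ : Measure (Fin d → ℂ)) [IsFiniteMeasure μ]
    (hμc : IsCompact (msupport μ))
    (α : ℕ → (Fin d →₀ ℕ)) (hα : AdmissibleEnum α)
    (hrank : ∀ m : ℕ, ∃ k : ℕ, m + 1 ≤ (momentMatrix μ α k).rank)
    (p : ℕ → MvPolynomial (Fin d) ℂ) (hp : IsONBasis μ α p)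
    (k n : ℕ) (hk1 : kdeg μ α n ≤ k) (hk2 : k < kdeg μ α (n + 1))
    (P : MvPolynomial (Fin d) ℂ) (hP : DegLE α P k) :
    (∃ q : MvPolynomial (Fin d) ℂ,
      (∀ z : Fin d → ℂ,
        MvPolynomial.eval z q = ∫ w, CDkernel p n z w * MvPolynomial.eval w P ∂μ) ∧
      q ∈ Lspan p n ∧ P - q ∈ NidealLE μ α (n + 1)) ∧
    (k = kdeg μ α n →
      NidealLE μ α n =
        {Q : MvPolynomial (Fin d) ℂ |
          DegLE α Q (kdeg μ α n) ∧ ∀ j ≤ n, inner2 μ Q (p j) = 0}) := by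
  have hmono := monotone_kdeg hμc hrank
  have hdeg : P - cdProj μ p n P ∈ degLESubmodule α (kdeg μ α (n + 1)) :=
    sub_mem (degLESubmodule_mono hk2.le hP)
      (degLESubmodule_mono (hmono n.le_succ) (cdProj_mem_degLESubmodule (hp n) hα.1.1 hmono P))
  refine ⟨⟨cdProj μ p n P, eval_cdProj hμc P, cdProj_mem_Lspan P,
    sub_cdProj_mem_Nideal hμc hα.1 hrank (hp n) hk1 hk2 hP, hdeg⟩, ?_⟩
  rintro rfl
  exact NidealLE_eq_setOf_inner2_eq_zero hμc hα.1 hrank (hp n) hk2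

/-- Projection onto `ℒ_n(μ)` via the Christoffel–Darboux kernel, and the
characterization of `𝒩_n(μ)` by orthogonality. -/
theorem statement1 (μ : Measure (Fin d → ℂ)) [IsFiniteMeasure μ]
    (hμ0 : μ ≠ 0) (hμc : IsCompact (msupport μ))
    (α : ℕ → (Fin d →₀ ℕ)) (hα : AdmissibleEnum α)
    (hrank : ∀ m : ℕ, ∃ k : ℕ, m + 1 ≤ (momentMatrix μ α k).rank)
    (p : ℕ → MvPolynomial (Fin d) ℂ) (hp : IsONBasis μ α p)
    (k n : ℕ) (hk1 : kdeg μ α n ≤ k) (hk2 : k < kdeg μ α (n + 1))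
    (P : MvPolynomial (Fin d) ℂ) (hP : DegLE α P k) :
    (∃ q : MvPolynomial (Fin d) ℂ,
      (∀ z : Fin d → ℂ,
        MvPolynomial.eval z q = ∫ w, CDkernel p n z w * MvPolynomial.eval w P ∂μ) ∧
      q ∈ Lspan p n ∧ P - q ∈ NidealLE μ α (n + 1)) ∧
    (k = kdeg μ α n →
      NidealLE μ α n =
        {Q : MvPolynomial (Fin d) ℂ |
          DegLE α Q (kdeg μ α n) ∧ ∀ j ≤ n, inner2 μ Q (p j) = 0}) :=
  statement1_general μ hμc α hα hrank p hp k n hk1 hk2 P hP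

end CD
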